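/- arXiv:0806.2071 — 3 statements merged into one kernel-verified Lean document; each statement's English description precedes it below -/
import Mathlib

section
/- For all d ∈ ℝ and u ∈ (-1,1), the generating identity T⁺(d,u) = Σ_{n≥0} τ_{n+1}(u)·dⁿ holds, where the series converges for |d| sufficiently small (depending on u). -/
noncomputable def Dop (p : Polynomial ℝ) : Polynomial ℝ :=
  (1 - Polynomial.X ^ 2) * Polynomial.derivative p

noncomputable def tau : ℕ → Polynomial ℝ
  | 0 => 1
  | 1 => Polynomial.X
  | (n + 2) => (((n : ℝ) + 1)⁻¹) • Dop (tau (n + 1))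

/-! Writing `u = tanh a`, the left-hand side is `tanh (a + d)`, so the series is the Taylor
series of the analytic function `tanh` at `a`. Since `(p ∘ tanh)' = (Dop p) ∘ tanh`, induction gives
`tanh⁽ⁿ⁾ = n! · τₙ₊₁ ∘ tanh`, which identifies the Taylor coefficients with `τₙ₊₁(u)`. -/

open Real

theorem Real.tanh_eq_sinh_div_cosh_fun : tanh = fun x => sinh x / cosh x :=
  funext tanh_eq_sinh_div_cosh

theorem Real.tanh_add (x y : ℝ) : tanh (x + y) = (tanh x + tanh y) / (1 + tanh x * tanh y) := by
  have hx := (cosh_pos x).ne'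
  have hy := (cosh_pos y).ne'
  have hxy : cosh x * cosh y + sinh x * sinh y ≠ 0 := by
    rw [← cosh_add]; exact (cosh_pos _).ne'
  simp only [tanh_eq_sinh_div_cosh, sinh_add, cosh_add]
  field_simp

theorem Real.hasDerivAt_tanh (x : ℝ) : HasDerivAt tanh (1 - tanh x ^ 2) x := by
  have hx := (cosh_pos x).ne'
  rw [tanh_eq_sinh_div_cosh_fun]
  refine ((hasDerivAt_sinh x).div (hasDerivAt_cosh x) hx).congr_deriv ?_
  field_simp

theorem Real.analyticAt_tanh (x : ℝ) : AnalyticAt ℝ tanh x := by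
  rw [tanh_eq_sinh_div_cosh_fun]
  exact analyticAt_sinh.div analyticAt_cosh (cosh_pos x).ne'

theorem deriv_eval_tanh (q : Polynomial ℝ) :
    deriv (fun x => q.eval (tanh x)) = fun x => (Dop q).eval (tanh x) := by
  funext x
  refine ((q.hasDerivAt (tanh x)).comp x (hasDerivAt_tanh x)).deriv.trans ?_
  simp [Dop, mul_comm]

theorem factorial_smul_tau_succ_succ (n : ℕ) :
    ((n + 1).factorial : ℝ) • tau (n + 2) = (n.factorial : ℝ) • Dop (tau (n + 1)) := by
  rw [tau, smul_smul, Nat.factorial_succ]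
  push_cast
  field_simp

theorem iteratedDeriv_tanh (n : ℕ) :
    iteratedDeriv n tanh = fun x => (n.factorial : ℝ) * (tau (n + 1)).eval (tanh x) := by
  induction n with
  | zero => simp [tau]
  | succ n ih =>
    rw [iteratedDeriv_succ, ih, deriv_const_mul_field', deriv_eval_tanh]
    funext x
    simpa using congrArg (Polynomial.eval (tanh x)) (factorial_smul_tau_succ_succ n).symm

theorem Tplus_generating_series (u : ℝ) (hu : u ∈ Set.Ioo (-1 : ℝ) 1) :
    ∃ r : ℝ, 0 < r ∧ ∀ d : ℝ, |d| < r →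
      HasSum (fun n : ℕ => (tau (n + 1)).eval u * d ^ n)
        ((u + Real.tanh d) / (1 + u * Real.tanh d)) := by
  obtain ⟨a, -, rfl⟩ := tanh_surjOn hu
  obtain ⟨r, hr, hsum⟩ :=
    Metric.eventually_nhds_iff.mp (analyticAt_tanh a).hasFPowerSeriesAt.eventually_hasSum
  refine ⟨r, hr, fun d hd => ?_⟩
  have taylor_coeff (n : ℕ) :
      iteratedDeriv n tanh a / n.factorial = (tau (n + 1)).eval (tanh a) := by
    simp [iteratedDeriv_tanh, Nat.factorial_ne_zero]
  simpa only [FormalMultilinearSeries.ofScalars_apply_eq', taylor_coeff, smul_eq_mul, tanh_add]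
    using hsum (by rwa [dist_zero_right, norm_eq_abs])
end

section
/- Let R be an odd polynomial with R(1) = 0. Then the function A(u) = -∫₀^u [ (∫₁^t R(s) ds) / (1-t²)² ] dt is an odd polynomial of degree ≤ deg(R), and satisfies the differential equation ((1-u²)²·A'(u))' + R(u) = 0 with A(0) = 0. -/
open Polynomial intervalIntegral

noncomputable def pInt (R : Polynomial ℝ) : Polynomial ℝ :=
  R.sum fun n a => Polynomial.C (a / (n + 1)) * Polynomial.X ^ (n + 1)

lemma derivative_pInt (R : Polynomial ℝ) : Polynomial.derivative (pInt R) = R := by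
  conv_rhs => rw [R.as_sum_support_C_mul_X_pow]
  rw [pInt, Polynomial.sum, map_sum]
  refine Finset.sum_congr rfl fun n hn => ?_
  rw [Polynomial.derivative_C_mul_X_pow]
  have hn1 : ((n : ℝ) + 1) ≠ 0 := by positivity
  push_cast
  rw [div_mul_cancel₀ _ hn1]

lemma natDegree_pInt (R : Polynomial ℝ) : (pInt R).natDegree ≤ R.natDegree + 1 := by
  rw [pInt, Polynomial.sum]
  refine Polynomial.natDegree_sum_le_of_forall_le _ _ fun n hn => ?_
  exact (Polynomial.natDegree_C_mul_X_pow_le _ _).trans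
    (by simpa using Nat.add_le_add_right (Polynomial.le_natDegree_of_mem_supp n hn) 1)

-- odd/even helper: if derivative (p.comp (-X) - q) = 0 and they agree at 0, then equal
lemma comp_neg_eq_of_deriv {p q : Polynomial ℝ}
    (hd : Polynomial.derivative (p.comp (-Polynomial.X) - q) = 0)
    (h0 : (p.comp (-Polynomial.X) - q).eval 0 = 0) :
    p.comp (-Polynomial.X) = q := by
  have hc := Polynomial.eq_C_of_derivative_eq_zero hd
  have h0' : (p.comp (-Polynomial.X) - q).coeff 0 = 0 := by
    rw [hc] at h0; simpa using h0
  have : p.comp (-Polynomial.X) - q = 0 := by rw [hc, h0', map_zero]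
  exact sub_eq_zero.mp this

theorem integral_solution_is_odd_polynomial
    (R : Polynomial ℝ) (hodd : R.comp (-Polynomial.X) = -R)
    (h1 : R.eval 1 = 0)
    (A : ℝ → ℝ)
    (hA : ∀ u : ℝ, A u =
      -∫ t in (0:ℝ)..u, (∫ s in (1:ℝ)..t, R.eval s) / (1 - t ^ 2) ^ 2) :
    ∃ P : Polynomial ℝ,
      (∀ u : ℝ, P.eval u = A u) ∧
      P.comp (-Polynomial.X) = -P ∧
      P.natDegree ≤ R.natDegree ∧
      Polynomial.derivative ((1 - Polynomial.X ^ 2) ^ 2 * Polynomial.derivative P) + R = 0 ∧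
      P.eval 0 = 0 := by
  classical
  set F := pInt R with hFdef
  have hF' : derivative F = R := derivative_pInt R
  set Q : Polynomial ℝ := F - C (F.eval 1) with hQdef
  have hQ' : derivative Q = R := by simp [hQdef, hF']
  have hQ1 : Q.eval 1 = 0 := by simp [hQdef]
  have hQeven : Q.comp (-X) = Q := by
    refine comp_neg_eq_of_deriv ?_ ?_
    · rw [map_sub, derivative_comp]
      simp [hQ', hodd]
    · simp [eval_comp]
  have hQm1 : Q.eval (-1) = 0 := by
    have := congrArg (eval 1) hQeven
    simpa [eval_comp, hQ1] using this
  have hRm1 : R.eval (-1) = 0 := by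
    have := congrArg (eval 1) hodd
    simpa [eval_comp, h1] using this
  -- inner integral is Q.eval t
  have hinner : ∀ t : ℝ, (∫ s in (1:ℝ)..t, R.eval s) = Q.eval t := by
    intro t
    rw [intervalIntegral.integral_eq_sub_of_hasDerivAt
        (f := fun x => F.eval x) (f' := fun x => R.eval x)
        (fun x _ => by simpa [hF'] using F.hasDerivAt x)
        ((R.continuous).intervalIntegrable _ _)]
    simp [hQdef]
  by_cases hQ0 : Q = 0
  · -- then R = 0 and A ≡ 0
    have hR0 : R = 0 := by rw [← hQ', hQ0, map_zero]
    refine ⟨0, fun u => ?_, by simp, by simp, by simp [hR0], by simp⟩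
    rw [hA]
    simp [hR0]
  -- divisibility
  have h2a : (X - C (1:ℝ)) ^ 2 ∣ Q := by
    refine (le_rootMultiplicity_iff hQ0).1 ?_
    exact (one_lt_rootMultiplicity_iff_isRoot hQ0).2 ⟨hQ1, by rw [hQ']; exact h1⟩
  have h2b : (X - C (-1:ℝ)) ^ 2 ∣ Q := by
    refine (le_rootMultiplicity_iff hQ0).1 ?_
    exact (one_lt_rootMultiplicity_iff_isRoot hQ0).2 ⟨hQm1, by rw [hQ']; exact hRm1⟩
  have hcop : IsCoprime ((X - C (1:ℝ)) ^ 2) ((X - C (-1:ℝ)) ^ 2) :=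
    (isCoprime_X_sub_C_of_isUnit_sub (by norm_num)).pow
  have hdvd : (1 - X ^ 2) ^ 2 ∣ Q := by
    have h := hcop.mul_dvd h2a h2b
    have hfac : (1 - X ^ 2 : Polynomial ℝ) ^ 2 = (X - C (1:ℝ)) ^ 2 * (X - C (-1:ℝ)) ^ 2 := by
      simp only [map_neg, map_one]
      ring
    rwa [hfac]
  obtain ⟨B, hB⟩ := hdvd
  have hfne : ((1 - X ^ 2 : Polynomial ℝ) ^ 2) ≠ 0 := by
    intro h
    have := congrArg (eval 0) h
    simp at this
  -- B is even
  have hBeven : B.comp (-X) = B := by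
    have h1' : (1 - X ^ 2 : Polynomial ℝ) ^ 2 * B.comp (-X) = (1 - X ^ 2) ^ 2 * B := by
      have := congrArg (fun p => Polynomial.comp p (-X)) hB
      simp only [mul_comp, pow_comp, sub_comp, one_comp, X_comp, hQeven] at this
      rw [hB] at this
      have hc2 : ((1 : Polynomial ℝ) - (-X) ^ 2) = 1 - X ^ 2 := by ring
      rw [hc2] at this
      exact this.symm
    exact mul_left_cancel₀ hfne h1'
  -- the antiderivative of B vanishing at 0
  set G : Polynomial ℝ := pInt B - C ((pInt B).eval 0) with hGdef
  have hG' : derivative G = B := by simp [hGdef, derivative_pInt]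
  have hG0 : G.eval 0 = 0 := by simp [hGdef]
  refine ⟨-G, ?_, ?_, ?_, ?_, by simp [hG0]⟩
  · -- eval = A
    intro u
    rw [hA]
    have hae : ∀ᵐ t : ℝ, t ∈ Set.uIoc (0:ℝ) u →
        (∫ s in (1:ℝ)..t, R.eval s) / (1 - t ^ 2) ^ 2 = B.eval t := by
      have hm : (MeasureTheory.volume : MeasureTheory.Measure ℝ) {(-1:ℝ), 1} = 0 :=
        (Set.toFinite _).measure_zero _
      rw [MeasureTheory.ae_iff]
      refine MeasureTheory.measure_mono_null ?_ hm
      intro t ht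
      simp only [Set.mem_setOf_eq] at ht
      by_contra htm
      simp only [Set.mem_insert_iff, Set.mem_singleton_iff] at htm
      push_neg at htm
      apply ht
      intro _
      have hne : (1 - t ^ 2) ≠ 0 := by
        intro h
        have h2 : (t - 1) * (t + 1) = 0 := by nlinarith [h]
        rcases mul_eq_zero.mp h2 with h' | h'
        · exact htm.2 (by linarith)
        · exact htm.1 (by linarith)
      rw [hinner t, hB]
      simp only [eval_mul, eval_pow, eval_sub, eval_one, eval_X]
      rw [mul_div_cancel_left₀ _ (pow_ne_zero 2 hne)]
    rw [intervalIntegral.integral_congr_ae hae,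
      intervalIntegral.integral_eq_sub_of_hasDerivAt
        (f := fun x => G.eval x) (f' := fun x => B.eval x)
        (fun x _ => by simpa [hG'] using G.hasDerivAt x)
        ((B.continuous).intervalIntegrable _ _)]
    simp [hG0]
  · -- oddness
    have h := comp_neg_eq_of_deriv (p := -G) (q := G) ?_ ?_
    · rw [h, neg_neg]
    · rw [map_sub, derivative_comp]
      simp [hG', hBeven]
    · simp [eval_comp, hG0]
  · -- degree bound
    rcases eq_or_ne B 0 with hB0 | hB0
    · have hGz : G = 0 := by
        have hdz : derivative G = 0 := by rw [hG', hB0]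
        have hc := eq_C_of_derivative_eq_zero hdz
        rw [hc] at hG0 ⊢
        simp at hG0
        simp [hG0]
      simp [hGz]
    · have hdQ : Q.natDegree = 4 + B.natDegree := by
        rw [hB, Polynomial.natDegree_mul hfne hB0]
        congr 1
        compute_degree!
      have hdQle : Q.natDegree ≤ R.natDegree + 1 := by
        refine (Polynomial.natDegree_sub_le _ _).trans ?_
        simpa [Polynomial.natDegree_C] using natDegree_pInt R
      have hdG : (-G).natDegree ≤ B.natDegree + 1 := by
        rw [Polynomial.natDegree_neg]
        refine (Polynomial.natDegree_sub_le _ _).trans ?_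
        simpa [Polynomial.natDegree_C] using natDegree_pInt B
      omega
  · -- the ODE
    have hdP : derivative (-G) = -B := by rw [map_neg, hG']
    rw [hdP]
    have hmq : (1 - X ^ 2 : Polynomial ℝ) ^ 2 * -B = -Q := by rw [hB]; ring
    rw [hmq, map_neg, hQ']
    ring
end

section
/- Define h₀(t,u) by the closed form h₀(t,u) = -(1/(2π)) · (1-u²)·sin(t/(2π))·cos(t/(2π)) / (cos²(t/(2π)) + u²·sin²(t/(2π))) + (τ₂(u)/(4π²))·t - (τ₄(u)/(16π⁴))·t³ + (τ₆(u)/(64π⁶))·t⁵ - (τ₈(u)/(256π⁸))·t⁷. Then h₀(t,u) = (i/(4π))·[tanh(ξ + it/(2π)) - tanh(ξ - it/(2π))] - (H₂(u)·t + H₄(u)·t³/3! + H₆(u)·t⁵/5! + H₈(u)·t⁷/7!), where ξ = artanh(u) and H_n(u) = (n-1)!·(i/(2π))ⁿ·τ_n(u). -/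
/-! Since `tanh a - tanh b = sinh (a - b) / (cosh a * cosh b)` and, for `a, b = ξ ± iθ`,
`cosh a * cosh b = cosh² ξ · (cos² θ + tanh² ξ · sin² θ)` with `cosh⁻² ξ = 1 - tanh² ξ`, the
`tanh` term is exactly the rational trigonometric term of `h₀` once `tanh ξ = u`.
The odd polynomial parts agree term by term because `H_{2k}(u) = (-1)ᵏ (2k-1)! τ_{2k}(u) / (2π)^{2k}`. -/

open Real Complex

/-- inverse hyperbolic tangent -/
noncomputable def artanhR (u : ℝ) : ℝ := (1 / 2) * Real.log ((1 + u) / (1 - u))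

/-- `H_n(u) = (n-1)!·(i/(2π))ⁿ·τ_n(u)` -/
noncomputable def Hc (n : ℕ) (u : ℝ) : ℂ :=
  ((n - 1).factorial : ℂ) * (Complex.I / (2 * Real.pi)) ^ n * (((tau n).eval u : ℝ) : ℂ)

/-- the closed form of `h₀(t,u)` -/
noncomputable def h0 (t u : ℝ) : ℝ :=
  -(1 / (2 * Real.pi)) *
      ((1 - u ^ 2) * Real.sin (t / (2 * Real.pi)) * Real.cos (t / (2 * Real.pi))) /
      (Real.cos (t / (2 * Real.pi)) ^ 2 + u ^ 2 * Real.sin (t / (2 * Real.pi)) ^ 2) +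
    ((tau 2).eval u / (4 * Real.pi ^ 2)) * t -
    ((tau 4).eval u / (16 * Real.pi ^ 4)) * t ^ 3 +
    ((tau 6).eval u / (64 * Real.pi ^ 6)) * t ^ 5 -
    ((tau 8).eval u / (256 * Real.pi ^ 8)) * t ^ 7

namespace Complex

theorem tanh_sub_tanh {a b : ℂ} (ha : cosh a ≠ 0) (hb : cosh b ≠ 0) :
    tanh a - tanh b = sinh (a - b) / (cosh a * cosh b) := by
  rw [tanh_eq_sinh_div_cosh, tanh_eq_sinh_div_cosh, sinh_sub, div_sub_div _ _ ha hb]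

theorem cosh_add_mul_I_mul_cosh_sub_mul_I (x y : ℂ) :
    cosh (x + y * I) * cosh (x - y * I) = cosh x ^ 2 * cos y ^ 2 + sinh x ^ 2 * sin y ^ 2 := by
  rw [cosh_add, cosh_sub, cosh_mul_I, sinh_mul_I]
  linear_combination (-(sinh x ^ 2 * sin y ^ 2)) * I_sq

theorem tanh_add_mul_I_sub_tanh_sub_mul_I {x y : ℂ} (hx : cosh x ≠ 0)
    (hy : cos y ^ 2 + tanh x ^ 2 * sin y ^ 2 ≠ 0) :
    tanh (x + y * I) - tanh (x - y * I)
      = 2 * (1 - tanh x ^ 2) * sin y * cos y * I / (cos y ^ 2 + tanh x ^ 2 * sin y ^ 2) := by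
  have hprod : cosh (x + y * I) * cosh (x - y * I)
      = cosh x ^ 2 * (cos y ^ 2 + tanh x ^ 2 * sin y ^ 2) := by
    rw [cosh_add_mul_I_mul_cosh_sub_mul_I, tanh_eq_sinh_div_cosh]
    field_simp
  have hne : cosh (x + y * I) * cosh (x - y * I) ≠ 0 := by
    rw [hprod]; exact mul_ne_zero (pow_ne_zero _ hx) hy
  have hsech : 1 - tanh x ^ 2 = (cosh x ^ 2)⁻¹ := by
    rw [tanh_eq_sinh_div_cosh]
    field_simp
    linear_combination cosh_sq x
  rw [tanh_sub_tanh (left_ne_zero_of_mul hne) (right_ne_zero_of_mul hne), hprod,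
    show x + y * I - (x - y * I) = (2 * y) * I by ring, sinh_mul_I, sin_two_mul, hsech]
  field_simp

end Complex

theorem artanhR_eq_artanh {u : ℝ} (hu : u ∈ Set.Ioo (-1 : ℝ) 1) : artanhR u = Real.artanh u :=
  (Real.artanh_eq_half_log (Set.Ioo_subset_Icc_self hu)).symm

theorem Hc_two_mul (u : ℝ) (k : ℕ) :
    Hc (2 * k) u
      = ((2 * k - 1).factorial : ℂ) * (-1) ^ k / (2 * π) ^ (2 * k) * (tau (2 * k)).eval u := by
  rw [Hc, div_pow, pow_mul, I_sq]
  ring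

theorem h0_closed_form (u t : ℝ) (hu : u ∈ Set.Ioo (-1 : ℝ) 1)
    (hden : Real.cos (t / (2 * Real.pi)) ^ 2
        + u ^ 2 * Real.sin (t / (2 * Real.pi)) ^ 2 ≠ 0) :
    (h0 t u : ℂ)
      = Complex.I / (4 * Real.pi) *
          (Complex.tanh ((artanhR u : ℂ) + Complex.I * t / (2 * Real.pi)) -
            Complex.tanh ((artanhR u : ℂ) - Complex.I * t / (2 * Real.pi))) -
        (Hc 2 u * t + Hc 4 u * t ^ 3 / (Nat.factorial 3 : ℂ) +
          Hc 6 u * t ^ 5 / (Nat.factorial 5 : ℂ) +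
          Hc 8 u * t ^ 7 / (Nat.factorial 7 : ℂ)) := by
  set θ : ℝ := t / (2 * π)
  have htanh : Complex.tanh (artanhR u : ℂ) = u := by
    rw [← ofReal_tanh, artanhR_eq_artanh hu, Real.tanh_artanh hu]
  have hcosh : Complex.cosh (artanhR u : ℂ) ≠ 0 := by
    rw [← ofReal_cosh]; exact_mod_cast (Real.cosh_pos _).ne'
  have hdenC : Complex.cos θ ^ 2 + Complex.tanh (artanhR u : ℂ) ^ 2 * Complex.sin θ ^ 2 ≠ 0 := by
    rw [htanh, ← ofReal_cos, ← ofReal_sin]; exact_mod_cast hden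
  have hden' : Complex.cos (t / (2 * π)) ^ 2 + u ^ 2 * Complex.sin (t / (2 * π)) ^ 2 ≠ 0 := by
    exact_mod_cast hden
  have harg : Complex.I * t / (2 * π) = (θ : ℂ) * Complex.I := by
    push_cast [θ]; ring
  have h2 := Hc_two_mul u 1
  have h4 := Hc_two_mul u 2
  have h6 := Hc_two_mul u 3
  have h8 := Hc_two_mul u 4
  norm_num [Nat.factorial] at h2 h4 h6 h8
  rw [harg, Complex.tanh_add_mul_I_sub_tanh_sub_mul_I hcosh hdenC, htanh, h2, h4, h6, h8]
  simp only [h0, θ, Nat.factorial]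
  push_cast
  field_simp
  rw [I_sq]
  ring
end
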